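/- arXiv:1701.02916 — 6 statements merged into one kernel-verified Lean document; each statement's English description precedes it below -/
import Mathlib

section
/- Let H be a complex Hilbert space and let v1, v2, v3, e1, e2 be minimal (rank-one) partial isometries in B(H) satisfying e1 ⊥ e2, v1 ⊥ v2, v1 ⊥ v3, -v1 + v3 = e1 - e2, and v1 + v2 = e1 + e2. Then v1 = e2 and v2 = e1 = v3. -/
/-!
Subtracting the two linear relations gives `2 e₂ = 2 v₁ + v₂ - v₃`; multiplying by `v₁` and using
`v₁ ⊥ v₂`, `v₁ ⊥ v₃` yields `v₁ e₂* = v₁ v₁*` and `e₂* v₁ = v₁* v₁`. Writing `v₁ = η ⊗ ξ` and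
`e₂ = b ⊗ a`, these identities force `ξ = d a` and `η = d b` for a unimodular scalar `d`, so
`v₁ = |d|² e₂ = e₂`; the other two equalities then follow from the linear relations.
-/

open scoped InnerProductSpace

variable {H : Type*} [NormedAddCommGroup H] [InnerProductSpace ℂ H] [CompleteSpace H]

/-- The rank-one operator `η ⊗ ξ : x ↦ ⟨x, ξ⟩ η`. -/
noncomputable def rankOne (η ξ : H) : H →L[ℂ] H := (innerSL ℂ ξ).smulRight η

/-- Minimal (rank-one) partial isometries in `B(H)` are exactly the operators `η ⊗ ξ`
with `ξ, η` unit vectors. -/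
def IsMinPI (v : H →L[ℂ] H) : Prop := ∃ ξ η : H, ‖ξ‖ = 1 ∧ ‖η‖ = 1 ∧ v = rankOne η ξ

/-- Orthogonality of operators: `a b* = 0` and `b* a = 0`. -/
def Orth (a b : H →L[ℂ] H) : Prop := a * star b = 0 ∧ star b * a = 0

omit [CompleteSpace H] in
lemma rankOne_apply (η ξ x : H) : rankOne η ξ x = ⟪ξ, x⟫_ℂ • η := rfl

lemma star_rankOne (η ξ : H) : star (rankOne η ξ) = rankOne ξ η := by
  rw [ContinuousLinearMap.star_eq_adjoint, eq_comm, ContinuousLinearMap.eq_adjoint_iff]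
  intro x y
  simp [rankOne_apply, inner_smul_left, inner_smul_right, mul_comm]

omit [CompleteSpace H] in
lemma rankOne_mul_rankOne (η ξ b a : H) :
    rankOne η ξ * rankOne b a = ⟪ξ, b⟫_ℂ • rankOne η a := by
  ext x
  simp [rankOne_apply, smul_smul, mul_comm]

omit [CompleteSpace H] in
lemma rankOne_smul_smul (c d : ℂ) (η ξ : H) :
    rankOne (c • η) (d • ξ) = (c * starRingEnd ℂ d) • rankOne η ξ := by
  ext x
  simp [rankOne_apply, smul_smul, mul_comm, mul_left_comm]

theorem IsMinPI.eq_of_mul_star_eq {v e : H →L[ℂ] H} (hv : IsMinPI v) (he : IsMinPI e)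
    (hR : v * star e = v * star v) (hL : star e * v = star v * v) : v = e := by
  obtain ⟨ξ, η, hξ, hη, rfl⟩ := hv
  obtain ⟨a, b, ha, -, rfl⟩ := he
  have hξξ := inner_self_eq_one_of_norm_eq_one (𝕜 := ℂ) hξ
  simp only [star_rankOne, rankOne_mul_rankOne, hξξ, inner_self_eq_one_of_norm_eq_one hη,
    one_smul] at hR hL
  set d : ℂ := ⟪b, η⟫_ℂ
  have hξa : ξ = d • a := by
    have h := DFunLike.congr_fun hL ξ
    simp only [smul_apply, rankOne_apply, hξξ, one_smul] at h
    exact h.symm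
  have hd : ‖d‖ = 1 := by rw [← hξ, hξa, norm_smul, ha, mul_one]
  have hηb : η = d • b := by
    have hη0 : η ≠ 0 := norm_ne_zero_iff.mp (hη ▸ one_ne_zero)
    refine ext_inner_right ℂ fun x => ?_
    have h := DFunLike.congr_fun hR x
    simp only [smul_apply, rankOne_apply, smul_smul] at h
    rw [← smul_left_injective ℂ hη0 h, hξa, inner_smul_left, inner_smul_left,
      inner_self_eq_one_of_norm_eq_one ha, mul_one]
  rw [hξa, hηb, rankOne_smul_smul, mul_comm, Complex.conj_mul', hd, Complex.ofReal_one,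
    one_pow, one_smul]

theorem stmt0_general (v1 v2 v3 e1 e2 : H →L[ℂ] H)
    (hv1 : IsMinPI v1)
    (he2 : IsMinPI e2)
    (hv12 : Orth v1 v2) (hv13 : Orth v1 v3)
    (h1 : -v1 + v3 = e1 - e2) (h2 : v1 + v2 = e1 + e2) :
    v1 = e2 ∧ v2 = e1 ∧ v3 = e1 := by
  have hsum : e2 + e2 = v1 + v1 + v2 - v3 :=
    calc e2 + e2 = (e1 + e2) - (e1 - e2) := by abel
      _ = (v1 + v2) - (-v1 + v3) := by rw [h1, h2]
      _ = v1 + v1 + v2 - v3 := by abel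
  have halve : ∀ x y : H →L[ℂ] H, x + x = y + y → x = y := fun x y h =>
    smul_right_injective _ (two_ne_zero (α := ℂ)) (by simpa only [two_smul] using h)
  have hR : v1 * star e2 = v1 * star v1 := halve _ _ <| by
    have h := congrArg (v1 * star ·) hsum
    simpa only [star_add, star_sub, mul_add, mul_sub, hv12.1, hv13.1, add_zero, sub_zero] using h
  have hL : star e2 * v1 = star v1 * v1 := halve _ _ <| by
    have h := congrArg (star · * v1) hsum
    simpa only [star_add, star_sub, add_mul, sub_mul, hv12.2, hv13.2, add_zero, sub_zero] using h
  obtain rfl : v1 = e2 := hv1.eq_of_mul_star_eq he2 hR hL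
  rw [add_comm e1] at h2
  rw [sub_eq_neg_add] at h1
  exact ⟨rfl, add_left_cancel h2, add_left_cancel h1⟩

theorem stmt0 (v1 v2 v3 e1 e2 : H →L[ℂ] H)
    (hv1 : IsMinPI v1) (hv2 : IsMinPI v2) (hv3 : IsMinPI v3)
    (he1 : IsMinPI e1) (he2 : IsMinPI e2)
    (he12 : Orth e1 e2) (hv12 : Orth v1 v2) (hv13 : Orth v1 v3)
    (h1 : -v1 + v3 = e1 - e2) (h2 : v1 + v2 = e1 + e2) :
    v1 = e2 ∧ v2 = e1 ∧ v3 = e1 :=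
  stmt0_general v1 v2 v3 e1 e2 hv1 he2 hv12 hv13 h1 h2
end

section
/- Let H be a complex Hilbert space and let w be a partial isometry in B(H), with p = w w* and q = w* w the associated projections. Then the set F_w = { x ∈ B(H) : ‖x‖ ≤ 1 and x w* = w w* } equals { w + (1 - p) y (1 - q) : y ∈ B(H), ‖y‖ ≤ 1 }. -/
/-!
Write `p = w w*` and `q = w* w`. If `‖x‖ ≤ 1` and `x w* = p`, then `x q = w`, so `x` is isometric
on the range of `q`; a contraction that preserves the norm of a vector `u` satisfies `x* x u = u`,
which gives `w* x = q` and hence `p x = w`, so that `(1 - p) x (1 - q) = x - w`. Conversely,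
`z = w + (1 - p) y (1 - q)` satisfies `z w* = p` because `(1 - q) w* = 0`, and since `w ξ` lies in
the range of `p`,
`‖z ξ‖² = ‖w ξ‖² + ‖(1 - p) y (1 - q) ξ‖² ≤ ‖q ξ‖² + ‖(1 - q) ξ‖² = ‖ξ‖²`.
-/

variable {H : Type*} [NormedAddCommGroup H] [InnerProductSpace ℂ H] [CompleteSpace H]

section PartialIsometry

variable {R : Type*} [Ring R] {w : R}

lemma eq_add_one_sub_mul_mul_one_sub {p q x : R} (hxq : x * q = w) (hpx : p * x = w)
    (hwq : w * q = w) : x = w + (1 - p) * x * (1 - q) := by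
  have : (1 - p) * x * (1 - q) = x - x * q - p * x + p * x * q := by noncomm_ring
  rw [this, hxq, hpx, hwq]
  abel

variable [StarRing R]

lemma star_mul_mul_star_of_mul_star_mul (hw : w * star w * w = w) :
    star w * w * star w = star w := by
  simpa [star_mul, mul_assoc] using congrArg star hw

lemma isStarProjection_mul_star_of_mul_star_mul (hw : w * star w * w = w) :
    IsStarProjection (w * star w) where
  isIdempotentElem := by rw [IsIdempotentElem, ← mul_assoc, hw]
  isSelfAdjoint := .mul_star_self w

lemma isStarProjection_star_mul_of_mul_star_mul (hw : w * star w * w = w) :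
    IsStarProjection (star w * w) := by
  simpa using isStarProjection_mul_star_of_mul_star_mul (w := star w) (by
    simpa using star_mul_mul_star_of_mul_star_mul hw)

lemma add_one_sub_mul_mul_one_sub_mul_star (hw : w * star w * w = w) (y : R) :
    (w + (1 - w * star w) * y * (1 - star w * w)) * star w = w * star w := by
  have hqw : (1 - star w * w) * star w = 0 := by
    rw [sub_mul, one_mul, star_mul_mul_star_of_mul_star_mul hw, sub_self]
  rw [add_mul, mul_assoc _ _ (star w), hqw, mul_zero, add_zero]

end PartialIsometry

namespace ContinuousLinearMap

variable {𝕜 E : Type*} [RCLike 𝕜] [NormedAddCommGroup E] [InnerProductSpace 𝕜 E] [CompleteSpace E]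

lemma norm_apply_eq_of_star_mul_self_eq {a b : E →L[𝕜] E}
    (h : star a * a = star b * b) (ξ : E) : ‖a ξ‖ = ‖b ξ‖ := by
  simp only [apply_norm_eq_sqrt_inner_adjoint_left, ← star_eq_adjoint, ← mul_def, h]

lemma star_apply_apply_of_norm_apply_eq {x : E →L[𝕜] E} (hx : ‖x‖ ≤ 1)
    {u : E} (hu : ‖x u‖ = ‖u‖) : star x (x u) = u := by
  have hle : ‖star x (x u)‖ ≤ ‖u‖ := by
    simpa [hu] using le_of_opNorm_le (star x) ((norm_star x).trans_le hx) (x u)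
  have hre : RCLike.re (inner 𝕜 (star x (x u)) u) = ‖u‖ ^ 2 := by
    rw [star_eq_adjoint, adjoint_inner_left, inner_self_eq_norm_sq, hu]
  have hsq := norm_sub_sq (𝕜 := 𝕜) (star x (x u)) u
  rw [← sub_eq_zero, ← norm_eq_zero]
  nlinarith [norm_nonneg (star x (x u)), norm_nonneg u, sq_nonneg ‖star x (x u) - u‖]

lemma _root_.IsStarProjection.inner_apply_one_sub_apply {e : E →L[𝕜] E}
    (he : IsStarProjection e) (a b : E) : inner 𝕜 (e a) ((1 - e) b) = 0 := by
  rw [← adjoint_inner_right, he.isSelfAdjoint.adjoint_eq, ← mul_apply_eq_comp,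
    he.mul_one_sub_self, zero_apply, inner_zero_right]

lemma _root_.IsStarProjection.norm_sq_apply_add_one_sub_apply {e : E →L[𝕜] E}
    (he : IsStarProjection e) (a b : E) : ‖e a + (1 - e) b‖ ^ 2 = ‖e a‖ ^ 2 + ‖(1 - e) b‖ ^ 2 := by
  simpa only [sq] using
    norm_add_sq_eq_norm_sq_add_norm_sq_of_inner_eq_zero _ _ (he.inner_apply_one_sub_apply a b)

lemma norm_apply_eq_norm_star_mul_self_apply {w : E →L[𝕜] E} (hw : w * star w * w = w)
    (ξ : E) :
    ‖w ξ‖ = ‖(star w * w) ξ‖ := by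
  have hq := isStarProjection_star_mul_of_mul_star_mul hw
  refine norm_apply_eq_of_star_mul_self_eq ?_ ξ
  rw [hq.isSelfAdjoint.star_eq, hq.isIdempotentElem.eq]

lemma eq_add_of_norm_le_one_of_mul_star_eq {w x : E →L[𝕜] E} (hw : w * star w * w = w)
    (hx : ‖x‖ ≤ 1) (hxw : x * star w = w * star w) :
    x = w + (1 - w * star w) * x * (1 - star w * w) := by
  have hq := isStarProjection_star_mul_of_mul_star_mul hw
  have hxq : x * (star w * w) = w := by rw [← mul_assoc, hxw, hw]
  have hsxw : star x * w = star w * w := by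
    ext ξ
    have hxqξ : x ((star w * w) ξ) = w ξ := DFunLike.congr_fun hxq ξ
    have hnorm : ‖x ((star w * w) ξ)‖ = ‖(star w * w) ξ‖ := by
      rw [hxqξ, norm_apply_eq_norm_star_mul_self_apply hw]
    have := star_apply_apply_of_norm_apply_eq hx hnorm
    rwa [hxqξ] at this
  have hpx : w * star w * x = w := by
    rw [mul_assoc, ← star_star x, ← star_mul, hsxw, hq.isSelfAdjoint.star_eq, ← mul_assoc, hw]
  exact eq_add_one_sub_mul_mul_one_sub hxq hpx (by rw [← mul_assoc, hw])

lemma norm_add_one_sub_mul_mul_one_sub_le_one {w y : E →L[𝕜] E} (hw : w * star w * w = w)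
    (hy : ‖y‖ ≤ 1) : ‖w + (1 - w * star w) * y * (1 - star w * w)‖ ≤ 1 := by
  set p := w * star w
  set q := star w * w
  have hp : IsStarProjection p := isStarProjection_mul_star_of_mul_star_mul hw
  have hq : IsStarProjection q := isStarProjection_star_mul_of_mul_star_mul hw
  refine opNorm_le_bound _ zero_le_one fun ξ ↦ ?_
  have hpwξ : p (w ξ) = w ξ := DFunLike.congr_fun hw ξ
  have hyξ : ‖(1 - p) (y ((1 - q) ξ))‖ ≤ ‖(1 - q) ξ‖ := by
    have : ‖(1 - p) * y‖ ≤ 1 :=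
      (norm_mul_le _ _).trans (mul_le_one₀ hp.one_sub.norm_le (norm_nonneg _) hy)
    simpa using le_of_opNorm_le _ this ((1 - q) ξ)
  have key : ‖(w + (1 - p) * y * (1 - q)) ξ‖ ^ 2 ≤ ‖ξ‖ ^ 2 := calc
    ‖(w + (1 - p) * y * (1 - q)) ξ‖ ^ 2 = ‖p (w ξ) + (1 - p) (y ((1 - q) ξ))‖ ^ 2 := by
      rw [hpwξ]; rfl
    _ = ‖w ξ‖ ^ 2 + ‖(1 - p) (y ((1 - q) ξ))‖ ^ 2 := by
      rw [hp.norm_sq_apply_add_one_sub_apply, hpwξ]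
    _ ≤ ‖q ξ‖ ^ 2 + ‖(1 - q) ξ‖ ^ 2 := by
      rw [norm_apply_eq_norm_star_mul_self_apply hw]
      gcongr
    _ = ‖ξ‖ ^ 2 := by
      rw [← hq.norm_sq_apply_add_one_sub_apply]
      congr 2
      simp
  rw [one_mul]
  exact (pow_le_pow_iff_left₀ (norm_nonneg _) (norm_nonneg _) two_ne_zero).mp key

end ContinuousLinearMap

theorem stmt5 (w : H →L[ℂ] H) (hw : w * star w * w = w) :
    {x : H →L[ℂ] H | ‖x‖ ≤ 1 ∧ x * star w = w * star w} =
      {z : H →L[ℂ] H | ∃ y : H →L[ℂ] H, ‖y‖ ≤ 1 ∧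
        z = w + (1 - w * star w) * y * (1 - star w * w)} := by
  ext x
  constructor
  · rintro ⟨hx, hxw⟩
    exact ⟨x, hx, ContinuousLinearMap.eq_add_of_norm_le_one_of_mul_star_eq hw hx hxw⟩
  · rintro ⟨y, hy, rfl⟩
    exact ⟨ContinuousLinearMap.norm_add_one_sub_mul_mul_one_sub_le_one hw hy,
      add_one_sub_mul_mul_one_sub_mul_star hw y⟩
end

section
/- Let H be a complex Hilbert space, let w be a partial isometry in B(H), and let x ∈ B(H) with ‖x‖ ≤ 1 and x w* = w w*. Then x = w + (1 - w w*) x (1 - w* w); in particular w* x = w* w and ‖w + t (1 - w w*) x (1 - w* w)‖ ≤ 1 for all t ∈ [0, 1]. -/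
/-!
Write `p = w* w` and `q = w w*` for the initial and final projections of `w`. The element
`z = x* w` satisfies `p z = p` (because `x w* = q`) and `z* z = w* x x* w ≤ p` (because `‖x‖ ≤ 1`);
then `(z - p)* (z - p) = z* z - p ≤ 0`, which forces `z = p`, i.e. `w* x = p`. Together with
`x p = w` this gives `x = w + (1 - q) x (1 - p)`. For the norm bound, `y = (1 - q) x (1 - p)` has
range orthogonal to that of `w`, so `(w + y)* (w + y) = p + y* y ≤ p + (1 - p) = 1`; replacing `x`
by `t x` handles the factor `t`.
-/

def IsPartialIsometry {R : Type*} [Mul R] [Star R] (w : R) : Prop :=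
  w * star w * w = w

namespace IsPartialIsometry

section Semigroup

variable {R : Type*} [Semigroup R] [StarMul R] {w : R}

protected theorem star (hw : IsPartialIsometry w) : IsPartialIsometry (star w) := by
  simpa [IsPartialIsometry, star_mul, mul_assoc] using congr(star $hw)

theorem star_mul_mul_star (hw : IsPartialIsometry w) : star w * w * star w = star w := by
  simpa [IsPartialIsometry] using hw.star

theorem isStarProjection_star_mul_self (hw : IsPartialIsometry w) :
    IsStarProjection (star w * w) where
  isIdempotentElem := by
    rw [IsIdempotentElem, ← mul_assoc, hw.star_mul_mul_star]
  isSelfAdjoint := .star_mul_self w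

theorem isStarProjection_mul_star_self (hw : IsPartialIsometry w) :
    IsStarProjection (w * star w) := by
  simpa using hw.star.isStarProjection_star_mul_self

end Semigroup

variable {R : Type*} [Ring R] [StarRing R] {w x : R}

theorem star_mul_one_sub_mul_star_self (hw : IsPartialIsometry w) :
    star w * (1 - w * star w) = 0 := by
  rw [mul_sub, mul_one, ← mul_assoc, hw.star_mul_mul_star, sub_self]

theorem eq_add_compression (hw : IsPartialIsometry w) (hwx : star w * x = star w * w)
    (hxw : x * star w = w * star w) :
    x = w + (1 - w * star w) * x * (1 - star w * w) := by
  have hqx : w * star w * x = w := by rw [mul_assoc, hwx, ← mul_assoc, hw]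
  have hxp : x * (star w * w) = w := by rw [← mul_assoc, hxw, hw]
  have hwp : w * (star w * w) = w := by rw [← mul_assoc, hw]
  rw [sub_mul, one_mul, hqx, mul_sub, mul_one, sub_mul, hxp, hwp]
  abel

end IsPartialIsometry

theorem star_add_mul_add_of_star_mul_eq_zero {R : Type*} [Ring R] [StarRing R] {a b : R}
    (h : star a * b = 0) : star (a + b) * (a + b) = star a * a + star b * b := by
  have h' : star b * a = 0 := by simpa using congr(star $h)
  rw [star_add, add_mul, mul_add, mul_add, h, h', add_zero, zero_add]

theorem eq_of_mul_eq_of_star_mul_self_le {A : Type*} [NonUnitalNormedRing A] [StarRing A]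
    [CStarRing A] [PartialOrder A] [StarOrderedRing A] {p z : A} (hp : IsStarProjection p)
    (hpz : p * z = p) (hz : star z * z ≤ p) : z = p := by
  have hzp : star z * p = p := by
    simpa [star_mul, hp.isSelfAdjoint.star_eq] using congr(star $hpz)
  have hdiff : star (z - p) * (z - p) = star z * z - p := by
    rw [star_sub, hp.isSelfAdjoint.star_eq, sub_mul, mul_sub, mul_sub, hzp, hpz,
      hp.isIdempotentElem.eq]
    abel
  have hzero : star (z - p) * (z - p) = 0 :=
    le_antisymm (hdiff ▸ sub_nonpos.mpr hz) (star_mul_self_nonneg _)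
  exact sub_eq_zero.mp ((CStarRing.star_mul_self_eq_zero_iff _).mp hzero)

section CStarAlgebra

variable {A : Type*} [CStarAlgebra A] [PartialOrder A] [StarOrderedRing A]

theorem norm_le_one_iff_star_mul_self_le_one (a : A) : ‖a‖ ≤ 1 ↔ star a * a ≤ 1 := by
  rw [← CStarAlgebra.norm_le_one_iff_of_nonneg _ (star_mul_self_nonneg a),
    CStarRing.norm_star_mul_self, ← sq, sq_le_one_iff₀ (norm_nonneg a)]

namespace IsPartialIsometry

variable {w x : A}

theorem star_mul_eq_star_mul_self (hw : IsPartialIsometry w) (hx : ‖x‖ ≤ 1)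
    (hxw : x * star w = w * star w) : star w * x = star w * w := by
  have hxw' : w * star x = w * star w := by simpa [star_mul] using congr(star $hxw)
  have hpz : star w * w * (star x * w) = star w * w := by
    rw [mul_assoc, ← mul_assoc w, hxw', ← mul_assoc, ← mul_assoc, hw.star_mul_mul_star]
  have hxx : x * star x ≤ 1 := by
    simpa using (norm_le_one_iff_star_mul_self_le_one (star x)).mp (by rwa [norm_star])
  have hzz : star (star x * w) * (star x * w) ≤ star w * w := by
    simpa [star_mul, mul_assoc] using star_left_conjugate_le_conjugate hxx w
  have hz := eq_of_mul_eq_of_star_mul_self_le hw.isStarProjection_star_mul_self hpz hzz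
  simpa [star_mul] using congr(star $hz)

theorem norm_add_compression_le_one (hw : IsPartialIsometry w) (hx : ‖x‖ ≤ 1) :
    ‖w + (1 - w * star w) * x * (1 - star w * w)‖ ≤ 1 := by
  set p := star w * w
  set y := (1 - w * star w) * x
  have hp := hw.isStarProjection_star_mul_self.one_sub
  have hy : star y * y ≤ 1 := by
    rw [← norm_le_one_iff_star_mul_self_le_one]
    calc ‖y‖ ≤ ‖1 - w * star w‖ * ‖x‖ := norm_mul_le _ _
      _ ≤ 1 * 1 := by
        gcongr
        exact hw.isStarProjection_mul_star_self.one_sub.norm_le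
      _ = 1 := one_mul 1
  have hwy : star w * (y * (1 - p)) = 0 := by
    rw [← mul_assoc, ← mul_assoc, hw.star_mul_one_sub_mul_star_self, zero_mul, zero_mul]
  have hyy : star (y * (1 - p)) * (y * (1 - p)) ≤ 1 - p :=
    calc star (y * (1 - p)) * (y * (1 - p)) = star (1 - p) * (star y * y) * (1 - p) := by
          simp only [star_mul, mul_assoc]
      _ ≤ star (1 - p) * 1 * (1 - p) := star_left_conjugate_le_conjugate hy _
      _ = 1 - p := by rw [mul_one, hp.isSelfAdjoint.star_eq, hp.isIdempotentElem.eq]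
  rw [norm_le_one_iff_star_mul_self_le_one, star_add_mul_add_of_star_mul_eq_zero hwy]
  calc p + star (y * (1 - p)) * (y * (1 - p)) ≤ p + (1 - p) := by gcongr
    _ = 1 := add_sub_cancel p 1

end IsPartialIsometry

end CStarAlgebra

variable {H : Type*} [NormedAddCommGroup H] [InnerProductSpace ℂ H] [CompleteSpace H]

theorem stmt6 (w x : H →L[ℂ] H) (hw : w * star w * w = w)
    (hx : ‖x‖ ≤ 1) (hxw : x * star w = w * star w) :
    x = w + (1 - w * star w) * x * (1 - star w * w) ∧
      star w * x = star w * w ∧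
      ∀ t : ℝ, t ∈ Set.Icc (0 : ℝ) 1 →
        ‖w + (t : ℂ) • ((1 - w * star w) * x * (1 - star w * w))‖ ≤ 1 := by
  have hw : IsPartialIsometry w := hw
  have hwx := hw.star_mul_eq_star_mul_self hx hxw
  refine ⟨hw.eq_add_compression hwx hxw, hwx, fun t ⟨ht0, ht1⟩ => ?_⟩
  have htx : ‖(t : ℂ) • x‖ ≤ 1 := by
    rw [norm_smul, Complex.norm_real, Real.norm_of_nonneg ht0]
    exact mul_le_one₀ ht1 (norm_nonneg x) hx
  simpa [mul_smul_comm, smul_mul_assoc] using hw.norm_add_compression_le_one htx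
end

section
/- Let X and Y be real normed spaces and let f : S(X) → S(Y) be a surjective isometry between their unit spheres. If C is a maximal convex subset of S(X), then f(C) is a maximal convex subset of S(Y). -/
open Set Metric

private lemma memS {X : Type*} [NormedAddCommGroup X] {x : X} :
    x ∈ Metric.sphere (0 : X) 1 ↔ ‖x‖ = 1 := by
  rw [mem_sphere_iff_norm, sub_zero]

section OneSpace

variable {X : Type*} [NormedAddCommGroup X] [NormedSpace ℝ X]

private lemma aux_seg_norm {x c : X} (hx : ‖x‖ = 1) (hc : ‖c‖ = 1)
    (h2 : ‖x + c‖ = 2) {a b : ℝ} (ha : 0 ≤ a) (hb : 0 ≤ b) (hab : a + b = 1) :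
    ‖a • x + b • c‖ = 1 := by
  have hb' : b = 1 - a := by linarith
  subst hb'
  have ha1 : a ≤ 1 := by linarith
  have hup : ∀ a' : ℝ, 0 ≤ a' → a' ≤ 1 → ‖a' • x + (1 - a') • c‖ ≤ 1 := by
    intro a' h0 h1
    calc ‖a' • x + (1 - a') • c‖ ≤ ‖a' • x‖ + ‖(1 - a') • c‖ := norm_add_le _ _
      _ = a' * 1 + (1 - a') * 1 := by
          rw [norm_smul, norm_smul, Real.norm_eq_abs, Real.norm_eq_abs,
            abs_of_nonneg h0, abs_of_nonneg (by linarith), hx, hc]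
      _ = 1 := by ring
  refine le_antisymm (hup a ha ha1) ?_
  have hid : x + c = (a • x + (1 - a) • c) + ((1 - a) • x + (1 - (1 - a)) • c) := by
    module
  have h3 : (2:ℝ) ≤ ‖a • x + (1 - a) • c‖ + ‖(1 - a) • x + (1 - (1 - a)) • c‖ := by
    rw [← h2, hid]; exact norm_add_le _ _
  have h4 := hup (1 - a) (by linarith) (by linarith)
  linarith

private lemma aux_flat (A B : X) {s : ℝ} (hs0 : 0 < s) (hs1 : s < 1)
    (hb : ∀ t : ℝ, 0 ≤ t → t ≤ 1 → ‖A + t • B‖ ≤ 2)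
    (hd : ‖A + s • B‖ = 2) :
    ∀ t : ℝ, 0 ≤ t → t ≤ 1 → ‖A + t • B‖ = 2 := by
  intro t ht0 ht1
  refine le_antisymm (hb t ht0 ht1) ?_
  rcases le_or_gt t s with h | h
  · have ht1' : t < 1 := lt_of_le_of_lt h hs1
    have h1t : (0:ℝ) < 1 - t := by linarith
    set l : ℝ := (1 - s) / (1 - t) with hldef
    have hl0 : 0 < l := div_pos (by linarith) h1t
    have hl1 : l ≤ 1 := by rw [hldef, div_le_one h1t]; linarith
    have hkey : l * (1 - t) = 1 - s := div_mul_cancel₀ _ (ne_of_gt h1t)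
    have hs' : s = l * t + (1 - l) := by nlinarith [hkey]
    have hid : A + s • B = l • (A + t • B) + (1 - l) • (A + (1:ℝ) • B) := by
      rw [hs']; module
    have hA1 : ‖A + (1:ℝ) • B‖ ≤ 2 := hb 1 zero_le_one le_rfl
    have h2le : (2:ℝ) ≤ l * ‖A + t • B‖ + (1 - l) * 2 := by
      calc (2:ℝ) = ‖A + s • B‖ := hd.symm
        _ = ‖l • (A + t • B) + (1 - l) • (A + (1:ℝ) • B)‖ := by rw [hid]
        _ ≤ ‖l • (A + t • B)‖ + ‖(1 - l) • (A + (1:ℝ) • B)‖ := norm_add_le _ _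
        _ = l * ‖A + t • B‖ + (1 - l) * ‖A + (1:ℝ) • B‖ := by
            rw [norm_smul, norm_smul, Real.norm_eq_abs, Real.norm_eq_abs,
              abs_of_nonneg (le_of_lt hl0), abs_of_nonneg (by linarith)]
        _ ≤ l * ‖A + t • B‖ + (1 - l) * 2 := by nlinarith
    nlinarith [hb t ht0 ht1]
  · have ht0' : 0 < t := lt_trans hs0 h
    set l : ℝ := s / t with hldef
    have hl0 : 0 < l := div_pos hs0 ht0'
    have hl1 : l ≤ 1 := by rw [hldef, div_le_one ht0']; linarith
    have hkey : l * t = s := div_mul_cancel₀ _ (ne_of_gt ht0')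
    have hs' : s = l * t := hkey.symm
    have hid : A + s • B = l • (A + t • B) + (1 - l) • (A + (0:ℝ) • B) := by
      rw [hs']; module
    have hA0 : ‖A + (0:ℝ) • B‖ ≤ 2 := hb 0 le_rfl zero_le_one
    have h2le : (2:ℝ) ≤ l * ‖A + t • B‖ + (1 - l) * 2 := by
      calc (2:ℝ) = ‖A + s • B‖ := hd.symm
        _ = ‖l • (A + t • B) + (1 - l) • (A + (0:ℝ) • B)‖ := by rw [hid]
        _ ≤ ‖l • (A + t • B)‖ + ‖(1 - l) • (A + (0:ℝ) • B)‖ := norm_add_le _ _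
        _ = l * ‖A + t • B‖ + (1 - l) * ‖A + (0:ℝ) • B‖ := by
            rw [norm_smul, norm_smul, Real.norm_eq_abs, Real.norm_eq_abs,
              abs_of_nonneg (le_of_lt hl0), abs_of_nonneg (by linarith)]
        _ ≤ l * ‖A + t • B‖ + (1 - l) * 2 := by nlinarith
    nlinarith [hb t ht0 ht1]

end OneSpace
/-- A maximal convex subset of the unit sphere of a normed space. -/
def IsMaximalConvexSubsetOfSphere {X : Type*} [NormedAddCommGroup X] [NormedSpace ℝ X]
    (C : Set X) : Prop :=
  C ⊆ Metric.sphere (0 : X) 1 ∧ Convex ℝ C ∧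
    ∀ D : Set X, D ⊆ Metric.sphere (0 : X) 1 → Convex ℝ D → C ⊆ D → C = D

section OneSpace2

variable {X : Type*} [NormedAddCommGroup X] [NormedSpace ℝ X]

private lemma aux_absorb {C : Set X} (hC : IsMaximalConvexSubsetOfSphere C)
    {x : X} (hx : x ∈ Metric.sphere (0:X) 1) (h : ∀ y ∈ C, ‖x + y‖ = 2) :
    x ∈ C := by
  rcases C.eq_empty_or_nonempty with hCe | ⟨c₀, hc₀⟩
  · have h1 : C = {x} := hC.2.2 {x} (by simpa using hx) (convex_singleton x) (by simp [hCe])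
    rw [h1]; exact mem_singleton x
  · set D := convexJoin ℝ {x} C with hD
    have hDs : D ⊆ Metric.sphere (0:X) 1 := by
      intro z hz
      rw [hD, mem_convexJoin] at hz
      obtain ⟨a, ha, w, hw, hzseg⟩ := hz
      rw [mem_singleton_iff] at ha; subst ha
      obtain ⟨u, v, hu, hv, huv, rfl⟩ := hzseg
      rw [memS]
      exact aux_seg_norm (memS.1 hx) (memS.1 (hC.1 hw)) (h w hw) hu hv huv
    have hDc : Convex ℝ D := (convex_singleton x).convexJoin hC.2.1
    have hCD : C ⊆ D := subset_convexJoin_right ⟨x, rfl⟩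
    have heq := hC.2.2 D hDs hDc hCD
    rw [heq]
    exact subset_convexJoin_left ⟨c₀, hc₀⟩ rfl

private lemma aux_neg {C : Set X} (hC : IsMaximalConvexSubsetOfSphere C) :
    IsMaximalConvexSubsetOfSphere (-C) := by
  obtain ⟨hCs, hCc, hCm⟩ := hC
  refine ⟨?_, hCc.neg, ?_⟩
  · intro z hz
    rw [Set.mem_neg] at hz
    have h1 := memS.1 (hCs hz)
    rw [memS, ← norm_neg]
    exact h1
  · intro D hDs hDc hsub
    have h1 : C = -D := by
      refine hCm (-D) ?_ hDc.neg ?_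
      · intro z hz
        rw [Set.mem_neg] at hz
        have h2 := memS.1 (hDs hz)
        rw [memS, ← norm_neg]
        exact h2
      · intro z hz
        rw [Set.mem_neg]
        exact hsub (by rwa [Set.mem_neg, neg_neg])
    rw [h1]
    exact neg_neg D

end OneSpace2
section TwoSpaces

variable {X Y : Type*} [NormedAddCommGroup X] [NormedSpace ℝ X]
  [NormedAddCommGroup Y] [NormedSpace ℝ Y]

private lemma aux_pair (f : X → Y)
    (hmap : ∀ x ∈ Metric.sphere (0 : X) 1, f x ∈ Metric.sphere (0 : Y) 1)
    (hsurj : ∀ y ∈ Metric.sphere (0 : Y) 1, ∃ x ∈ Metric.sphere (0 : X) 1, f x = y)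
    (hiso : ∀ x ∈ Metric.sphere (0 : X) 1, ∀ y ∈ Metric.sphere (0 : X) 1,
      ‖f x - f y‖ = ‖x - y‖)
    {C : Set X} (hC : IsMaximalConvexSubsetOfSphere C)
    {x y : X} (hx : x ∈ C) (hy : y ∈ C) : ‖f x + f y‖ = 2 := by
  have hxS := hC.1 hx
  have hyS := hC.1 hy
  have hpC : ∀ t : ℝ, 0 ≤ t → t ≤ 1 → (1 - t) • y + t • x ∈ C := fun t h0 h1 =>
    hC.2.1 hy hx (by linarith) h0 (by ring)
  have hstep : ∀ s : ℝ, 0 < s → s < 1 → ‖f x + f ((1 - s) • y + s • x)‖ = 2 := by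
    intro s hs0 hs1
    have hcsC : (1 - s) • y + s • x ∈ C := hpC s (le_of_lt hs0) (le_of_lt hs1)
    have hcsS := hC.1 hcsC
    have hnfcs : ‖f ((1 - s) • y + s • x)‖ = 1 := memS.1 (hmap _ hcsS)
    have hmfcs : -f ((1 - s) • y + s • x) ∈ Metric.sphere (0:Y) 1 := by
      rw [memS, norm_neg]; exact hnfcs
    obtain ⟨z, hzS, hfz⟩ := hsurj _ hmfcs
    have hrepr : ∀ t : ℝ, (y - z) + t • (x - y) = ((1 - t) • y + t • x) - z := by
      intro t; module
    have hb : ∀ t : ℝ, 0 ≤ t → t ≤ 1 → ‖(y - z) + t • (x - y)‖ ≤ 2 := by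
      intro t h0 h1
      have htC := hpC t h0 h1
      rw [hrepr t, ← hiso _ (hC.1 htC) _ hzS]
      have h1' : ‖f ((1 - t) • y + t • x)‖ = 1 := memS.1 (hmap _ (hC.1 htC))
      have h2' : ‖f z‖ = 1 := memS.1 (hmap _ hzS)
      calc ‖f ((1 - t) • y + t • x) - f z‖
          ≤ ‖f ((1 - t) • y + t • x)‖ + ‖f z‖ := norm_sub_le _ _
        _ = 2 := by rw [h1', h2']; norm_num
    have hdiag : ‖(y - z) + s • (x - y)‖ = 2 := by
      rw [hrepr s, ← hiso _ hcsS _ hzS, hfz, sub_neg_eq_add]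
      have h2 : f ((1 - s) • y + s • x) + f ((1 - s) • y + s • x)
          = (2:ℝ) • f ((1 - s) • y + s • x) := by module
      rw [h2, norm_smul, hnfcs]
      norm_num
    have h1 := aux_flat (y - z) (x - y) hs0 hs1 hb hdiag 1 zero_le_one le_rfl
    rw [hrepr 1] at h1
    have h1x : ((1:ℝ) - 1) • y + (1:ℝ) • x = x := by module
    rw [h1x, ← hiso _ hxS _ hzS, hfz, sub_neg_eq_add] at h1
    exact h1
  have hub : ‖f x + f y‖ ≤ 2 := by
    have h1 : ‖f x‖ = 1 := memS.1 (hmap _ hxS)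
    have h2 : ‖f y‖ = 1 := memS.1 (hmap _ hyS)
    calc ‖f x + f y‖ ≤ ‖f x‖ + ‖f y‖ := norm_add_le _ _
      _ = 2 := by rw [h1, h2]; norm_num
  refine le_antisymm hub ?_
  by_contra hlt
  push_neg at hlt
  set ε := 2 - ‖f x + f y‖ with hε
  have hε0 : 0 < ε := by simp only [hε]; linarith
  have hden : (0:ℝ) < ‖x - y‖ + 1 := by positivity
  set s := min (1/2 : ℝ) (ε / (‖x - y‖ + 1)) with hs
  have hs0 : 0 < s := lt_min (by norm_num) (div_pos hε0 hden)
  have hs1 : s < 1 := lt_of_le_of_lt (min_le_left _ _) (by norm_num)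
  have h2 := hstep s hs0 hs1
  have hcsC : (1 - s) • y + s • x ∈ C := hpC s (le_of_lt hs0) (le_of_lt hs1)
  have hdist : ‖f ((1 - s) • y + s • x) - f y‖ = s * ‖x - y‖ := by
    rw [hiso _ (hC.1 hcsC) _ hyS]
    have h3 : (1 - s) • y + s • x - y = s • (x - y) := by module
    rw [h3, norm_smul, Real.norm_eq_abs, abs_of_nonneg (le_of_lt hs0)]
  have htri : (2:ℝ) ≤ ‖f x + f y‖ + ‖f ((1 - s) • y + s • x) - f y‖ := by
    have h4 : f x + f ((1 - s) • y + s • x)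
        = (f x + f y) + (f ((1 - s) • y + s • x) - f y) := by module
    calc (2:ℝ) = ‖f x + f ((1 - s) • y + s • x)‖ := h2.symm
      _ = ‖(f x + f y) + (f ((1 - s) • y + s • x) - f y)‖ := by rw [h4]
      _ ≤ _ := norm_add_le _ _
  have hsmall : s * ‖x - y‖ < ε := by
    have hsle : s ≤ ε / (‖x - y‖ + 1) := min_le_right _ _
    have h5 : s * ‖x - y‖ ≤ (ε / (‖x - y‖ + 1)) * ‖x - y‖ :=
      mul_le_mul_of_nonneg_right hsle (norm_nonneg _)
    have h6 : (ε / (‖x - y‖ + 1)) * ‖x - y‖ < ε := by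
      rw [div_mul_eq_mul_div, div_lt_iff₀ hden]
      nlinarith [norm_nonneg (x - y)]
    linarith
  rw [hdist] at htri
  simp only [hε] at hsmall
  linarith

end TwoSpaces
section TwoSpaces2

variable {X Y : Type*} [NormedAddCommGroup X] [NormedSpace ℝ X]
  [NormedAddCommGroup Y] [NormedSpace ℝ Y]

private lemma aux_triple (f : X → Y)
    (hmap : ∀ x ∈ Metric.sphere (0 : X) 1, f x ∈ Metric.sphere (0 : Y) 1)
    (hsurj : ∀ y ∈ Metric.sphere (0 : Y) 1, ∃ x ∈ Metric.sphere (0 : X) 1, f x = y)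
    (hiso : ∀ x ∈ Metric.sphere (0 : X) 1, ∀ y ∈ Metric.sphere (0 : X) 1,
      ‖f x - f y‖ = ‖x - y‖)
    {C : Set X} (hC : IsMaximalConvexSubsetOfSphere C)
    {p q r : X} (hp : p ∈ C) (hq : q ∈ C) (hr : r ∈ C) :
    ‖f p + (1/2 : ℝ) • (f q + f r)‖ = 2 := by
  have hpS := hC.1 hp
  have hqS := hC.1 hq
  have hrS := hC.1 hr
  have hfr1 : ‖f r‖ = 1 := memS.1 (hmap _ hrS)
  have hu : ∀ t : ℝ, 0 ≤ t → t ≤ 1 → (1 - t) • p + t • q ∈ C := fun t h0 h1 =>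
    hC.2.1 hp hq (by linarith) h0 (by ring)
  have hstep : ∀ s : ℝ, 0 < s → s < 1 →
      ‖f p + (1/2 : ℝ) • (f ((1 - s) • p + s • q) + f r)‖ = 2 := by
    intro s hs0 hs1
    have husC : (1 - s) • p + s • q ∈ C := hu s (le_of_lt hs0) (le_of_lt hs1)
    have hpair_sr : ‖f ((1 - s) • p + s • q) + f r‖ = 2 :=
      aux_pair f hmap hsurj hiso hC husC hr
    have hmid : -((1/2 : ℝ) • (f ((1 - s) • p + s • q) + f r)) ∈ Metric.sphere (0:Y) 1 := by
      rw [memS, norm_neg, norm_smul, hpair_sr]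
      norm_num
    obtain ⟨R, hRS, hfR⟩ := hsurj _ hmid
    have hrepr : ∀ t : ℝ, (p - R) + t • (q - p) = ((1 - t) • p + t • q) - R := by
      intro t; module
    have hb : ∀ t : ℝ, 0 ≤ t → t ≤ 1 → ‖(p - R) + t • (q - p)‖ ≤ 2 := by
      intro t h0 h1
      have hutC := hu t h0 h1
      rw [hrepr t, ← hiso _ (hC.1 hutC) _ hRS, hfR, sub_neg_eq_add]
      have hpair1 : ‖f ((1 - t) • p + t • q) + f ((1 - s) • p + s • q)‖ = 2 :=
        aux_pair f hmap hsurj hiso hC hutC husC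
      have hpair2 : ‖f ((1 - t) • p + t • q) + f r‖ = 2 :=
        aux_pair f hmap hsurj hiso hC hutC hr
      have hidd : f ((1 - t) • p + t • q) + (1/2 : ℝ) • (f ((1 - s) • p + s • q) + f r)
          = (1/2 : ℝ) • (f ((1 - t) • p + t • q) + f ((1 - s) • p + s • q))
            + (1/2 : ℝ) • (f ((1 - t) • p + t • q) + f r) := by module
      rw [hidd]
      calc ‖(1/2 : ℝ) • (f ((1 - t) • p + t • q) + f ((1 - s) • p + s • q))
            + (1/2 : ℝ) • (f ((1 - t) • p + t • q) + f r)‖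
          ≤ ‖(1/2 : ℝ) • (f ((1 - t) • p + t • q) + f ((1 - s) • p + s • q))‖
            + ‖(1/2 : ℝ) • (f ((1 - t) • p + t • q) + f r)‖ := norm_add_le _ _
        _ = 2 := by
            rw [norm_smul, norm_smul, hpair1, hpair2]
            norm_num
    have hdiag : ‖(p - R) + s • (q - p)‖ = 2 := by
      refine le_antisymm (hb s (le_of_lt hs0) (le_of_lt hs1)) ?_
      rw [hrepr s, ← hiso _ (hC.1 husC) _ hRS, hfR, sub_neg_eq_add]
      have hidd : f ((1 - s) • p + s • q) + f r
          = (2/3 : ℝ) • (f ((1 - s) • p + s • q)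
              + (1/2 : ℝ) • (f ((1 - s) • p + s • q) + f r)) + (2/3 : ℝ) • f r := by
        module
      have h2 : (2:ℝ) = ‖(2/3 : ℝ) • (f ((1 - s) • p + s • q)
          + (1/2 : ℝ) • (f ((1 - s) • p + s • q) + f r)) + (2/3 : ℝ) • f r‖ := by
        rw [← hidd, hpair_sr]
      have h3 : ‖(2/3 : ℝ) • (f ((1 - s) • p + s • q)
            + (1/2 : ℝ) • (f ((1 - s) • p + s • q) + f r)) + (2/3 : ℝ) • f r‖
          ≤ (2/3) * ‖f ((1 - s) • p + s • q)
            + (1/2 : ℝ) • (f ((1 - s) • p + s • q) + f r)‖ + (2/3) * 1 := by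
        calc ‖(2/3 : ℝ) • (f ((1 - s) • p + s • q)
              + (1/2 : ℝ) • (f ((1 - s) • p + s • q) + f r)) + (2/3 : ℝ) • f r‖
            ≤ ‖(2/3 : ℝ) • (f ((1 - s) • p + s • q)
              + (1/2 : ℝ) • (f ((1 - s) • p + s • q) + f r))‖ + ‖(2/3 : ℝ) • f r‖ :=
              norm_add_le _ _
          _ = (2/3) * ‖f ((1 - s) • p + s • q)
              + (1/2 : ℝ) • (f ((1 - s) • p + s • q) + f r)‖ + (2/3) * 1 := by
              rw [norm_smul, norm_smul, hfr1]
              norm_num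
      linarith
    have h0 := aux_flat (p - R) (q - p) hs0 hs1 hb hdiag 0 le_rfl zero_le_one
    have h0x : (p - R) + (0:ℝ) • (q - p) = p - R := by module
    rw [h0x, ← hiso _ hpS _ hRS, hfR, sub_neg_eq_add] at h0
    exact h0
  have hub : ‖f p + (1/2 : ℝ) • (f q + f r)‖ ≤ 2 := by
    have hpair1 : ‖f p + f q‖ = 2 := aux_pair f hmap hsurj hiso hC hp hq
    have hpair2 : ‖f p + f r‖ = 2 := aux_pair f hmap hsurj hiso hC hp hr
    have hidd : f p + (1/2 : ℝ) • (f q + f r)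
        = (1/2 : ℝ) • (f p + f q) + (1/2 : ℝ) • (f p + f r) := by module
    rw [hidd]
    calc ‖(1/2 : ℝ) • (f p + f q) + (1/2 : ℝ) • (f p + f r)‖
        ≤ ‖(1/2 : ℝ) • (f p + f q)‖ + ‖(1/2 : ℝ) • (f p + f r)‖ := norm_add_le _ _
      _ = 2 := by rw [norm_smul, norm_smul, hpair1, hpair2]; norm_num
  refine le_antisymm hub ?_
  by_contra hlt
  push_neg at hlt
  set ε := 2 - ‖f p + (1/2 : ℝ) • (f q + f r)‖ with hε
  have hε0 : 0 < ε := by simp only [hε]; linarith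
  have hden : (0:ℝ) < ‖p - q‖ + 1 := by positivity
  set δ := min (1/2 : ℝ) (ε / (‖p - q‖ + 1)) with hδ
  have hδ0 : 0 < δ := lt_min (by norm_num) (div_pos hε0 hden)
  have hδh : δ ≤ 1/2 := min_le_left _ _
  set s := 1 - δ with hsdef
  have hs0 : 0 < s := by simp only [hsdef]; linarith
  have hs1 : s < 1 := by simp only [hsdef]; linarith
  have h2 := hstep s hs0 hs1
  have husC : (1 - s) • p + s • q ∈ C := hu s (le_of_lt hs0) (le_of_lt hs1)
  have hdist : ‖f ((1 - s) • p + s • q) - f q‖ = δ * ‖p - q‖ := by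
    rw [hiso _ (hC.1 husC) _ hqS]
    have h3 : (1 - s) • p + s • q - q = (1 - s) • (p - q) := by module
    rw [h3, norm_smul, Real.norm_eq_abs]
    have h4 : (1:ℝ) - s = δ := by simp only [hsdef]; ring
    rw [h4, abs_of_nonneg (le_of_lt hδ0)]
  have htri : (2:ℝ) ≤ ‖f p + (1/2 : ℝ) • (f q + f r)‖
      + (1/2) * ‖f ((1 - s) • p + s • q) - f q‖ := by
    have h4 : f p + (1/2 : ℝ) • (f ((1 - s) • p + s • q) + f r)
        = (f p + (1/2 : ℝ) • (f q + f r))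
          + (1/2 : ℝ) • (f ((1 - s) • p + s • q) - f q) := by module
    calc (2:ℝ) = ‖f p + (1/2 : ℝ) • (f ((1 - s) • p + s • q) + f r)‖ := h2.symm
      _ = ‖(f p + (1/2 : ℝ) • (f q + f r))
          + (1/2 : ℝ) • (f ((1 - s) • p + s • q) - f q)‖ := by rw [h4]
      _ ≤ ‖f p + (1/2 : ℝ) • (f q + f r)‖
          + ‖(1/2 : ℝ) • (f ((1 - s) • p + s • q) - f q)‖ := norm_add_le _ _
      _ = ‖f p + (1/2 : ℝ) • (f q + f r)‖
          + (1/2) * ‖f ((1 - s) • p + s • q) - f q‖ := by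
          rw [norm_smul]; norm_num
  rw [hdist] at htri
  have hsmall : δ * ‖p - q‖ < ε := by
    have hsle : δ ≤ ε / (‖p - q‖ + 1) := min_le_right _ _
    have h5 : δ * ‖p - q‖ ≤ (ε / (‖p - q‖ + 1)) * ‖p - q‖ :=
      mul_le_mul_of_nonneg_right hsle (norm_nonneg _)
    have h6 : (ε / (‖p - q‖ + 1)) * ‖p - q‖ < ε := by
      rw [div_mul_eq_mul_div, div_lt_iff₀ hden]
      nlinarith [norm_nonneg (p - q)]
    linarith
  simp only [hε] at hsmall
  linarith

end TwoSpaces2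
section TwoSpaces3

variable {X Y : Type*} [NormedAddCommGroup X] [NormedSpace ℝ X]
  [NormedAddCommGroup Y] [NormedSpace ℝ Y]

private lemma aux_image (f : X → Y)
    (hmap : ∀ x ∈ Metric.sphere (0 : X) 1, f x ∈ Metric.sphere (0 : Y) 1)
    (hsurj : ∀ y ∈ Metric.sphere (0 : Y) 1, ∃ x ∈ Metric.sphere (0 : X) 1, f x = y)
    (hiso : ∀ x ∈ Metric.sphere (0 : X) 1, ∀ y ∈ Metric.sphere (0 : X) 1,
      ‖f x - f y‖ = ‖x - y‖)
    {C : Set X} (hC : IsMaximalConvexSubsetOfSphere C) :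
    f '' C ⊆ Metric.sphere (0 : Y) 1 ∧ Convex ℝ (f '' C) := by
  constructor
  · rintro _ ⟨x, hx, rfl⟩
    exact hmap _ (hC.1 hx)
  · rintro _ ⟨p, hp, rfl⟩ _ ⟨q, hq, rfl⟩ a b ha hb hab
    have hb' : b = 1 - a := by linarith
    subst hb'
    have ha1 : a ≤ 1 := by linarith
    have hpair := aux_pair f hmap hsurj hiso hC hp hq
    have hfp1 : ‖f p‖ = 1 := memS.1 (hmap _ (hC.1 hp))
    have hfq1 : ‖f q‖ = 1 := memS.1 (hmap _ (hC.1 hq))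
    have hwS : a • f p + (1 - a) • f q ∈ Metric.sphere (0:Y) 1 := by
      rw [memS]
      exact aux_seg_norm hfp1 hfq1 hpair ha (by linarith) (by ring)
    obtain ⟨m, hmS, hfm⟩ := hsurj _ hwS
    have hmC : m ∈ C := by
      apply aux_absorb hC hmS
      intro y hy
      have hyS := hC.1 hy
      have hnyS : -y ∈ Metric.sphere (0:X) 1 := by
        rw [memS, norm_neg]; exact memS.1 hyS
      have hfnyS : -f (-y) ∈ Metric.sphere (0:Y) 1 := by
        rw [memS, norm_neg]; exact memS.1 (hmap _ hnyS)
      obtain ⟨y', hy'S, hfy'⟩ := hsurj _ hfnyS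
      have hnegC := aux_neg hC
      have hy'C : y' ∈ C := by
        apply aux_absorb hC hy'S
        intro c hc
        have hncS : -c ∈ Metric.sphere (0:X) 1 := by
          rw [memS, norm_neg]; exact memS.1 (hC.1 hc)
        have hymem : -y ∈ -C := by rw [Set.mem_neg, neg_neg]; exact hy
        have hcmem : -c ∈ -C := by rw [Set.mem_neg, neg_neg]; exact hc
        have hpair2 : ‖f (-y) + f (-c)‖ = 2 :=
          aux_pair f hmap hsurj hiso hnegC hymem hcmem
        have h1 : y' + c = y' - (-c) := by module
        rw [h1, ← hiso _ hy'S _ hncS, hfy', ← norm_neg]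
        have h2 : -(-f (-y) - f (-c)) = f (-y) + f (-c) := by module
        rw [h2]
        exact hpair2
      have h3 : ‖f y' + (1/2 : ℝ) • (f p + f q)‖ = 2 :=
        aux_triple f hmap hsurj hiso hC hy'C hp hq
      have hfy'1 : ‖f y'‖ = 1 := memS.1 (hmap _ hy'S)
      have hVle : ∀ a' : ℝ, 0 ≤ a' → a' ≤ 1 →
          ‖a' • f p + (1 - a') • f q + f y'‖ ≤ 2 := by
        intro a' h0 h1
        have hp1 : ‖f p + f y'‖ = 2 := aux_pair f hmap hsurj hiso hC hp hy'C
        have hq1 : ‖f q + f y'‖ = 2 := aux_pair f hmap hsurj hiso hC hq hy'C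
        have hidd : a' • f p + (1 - a') • f q + f y'
            = a' • (f p + f y') + (1 - a') • (f q + f y') := by module
        rw [hidd]
        calc ‖a' • (f p + f y') + (1 - a') • (f q + f y')‖
            ≤ ‖a' • (f p + f y')‖ + ‖(1 - a') • (f q + f y')‖ := norm_add_le _ _
          _ = a' * 2 + (1 - a') * 2 := by
              rw [norm_smul, norm_smul, Real.norm_eq_abs, Real.norm_eq_abs,
                abs_of_nonneg h0, abs_of_nonneg (by linarith), hp1, hq1]
          _ = 2 := by ring
      have hV : ‖a • f p + (1 - a) • f q + f y'‖ = 2 := by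
        refine le_antisymm (hVle a ha ha1) ?_
        have hidd : (a • f p + (1 - a) • f q + f y')
            + ((1 - a) • f p + (1 - (1 - a)) • f q + f y')
            = (2:ℝ) • (f y' + (1/2 : ℝ) • (f p + f q)) := by module
        have h4 : ‖(a • f p + (1 - a) • f q + f y')
            + ((1 - a) • f p + (1 - (1 - a)) • f q + f y')‖ = 4 := by
          rw [hidd, norm_smul, h3]
          norm_num
        have h5 := hVle (1 - a) (by linarith) (by linarith)
        have h6 : (4:ℝ) ≤ ‖a • f p + (1 - a) • f q + f y'‖
            + ‖(1 - a) • f p + (1 - (1 - a)) • f q + f y'‖ := by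
          rw [← h4]; exact norm_add_le _ _
        linarith
      have h7 : m + y = m - (-y) := by module
      rw [h7, ← hiso _ hmS _ hnyS, hfm]
      have h8 : f (-y) = -f y' := by rw [hfy', neg_neg]
      rw [h8, sub_neg_eq_add]
      exact hV
    exact ⟨m, hmC, hfm⟩

private lemma aux_exists_max {D : Set Y} (hDs : D ⊆ Metric.sphere (0:Y) 1)
    (hDc : Convex ℝ D) :
    ∃ M, IsMaximalConvexSubsetOfSphere M ∧ D ⊆ M := by
  set S : Set (Set Y) := {E | D ⊆ E ∧ E ⊆ Metric.sphere (0:Y) 1 ∧ Convex ℝ E} with hS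
  have hzorn : ∃ M, D ⊆ M ∧ Maximal (· ∈ S) M := by
    apply zorn_subset_nonempty S ?_ D ⟨Subset.rfl, hDs, hDc⟩
    intro c hcS hchain hcne
    refine ⟨⋃₀ c, ⟨?_, ?_, ?_⟩, fun s hs => subset_sUnion_of_mem hs⟩
    · obtain ⟨E, hE⟩ := hcne
      exact (hcS hE).1.trans (subset_sUnion_of_mem hE)
    · intro z hz
      obtain ⟨E, hEc, hzE⟩ := hz
      exact (hcS hEc).2.1 hzE
    · intro u hu v hv a b ha hb hab
      obtain ⟨E, hEc, huE⟩ := hu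
      obtain ⟨F, hFc, hvF⟩ := hv
      rcases hchain.total hEc hFc with h | h
      · exact subset_sUnion_of_mem hFc ((hcS hFc).2.2 (h huE) hvF ha hb hab)
      · exact subset_sUnion_of_mem hEc ((hcS hEc).2.2 huE (h hvF) ha hb hab)
  obtain ⟨M, hDM, hmax⟩ := hzorn
  obtain ⟨hM1, hM2, hM3⟩ := hmax.prop
  refine ⟨M, ⟨hM2, hM3, ?_⟩, hDM⟩
  intro E hEs hEc hME
  exact hmax.eq_of_le ⟨hM1.trans hME, hEs, hEc⟩ hME

end TwoSpaces3
theorem stmt7 {X Y : Type*} [NormedAddCommGroup X] [NormedSpace ℝ X]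
    [NormedAddCommGroup Y] [NormedSpace ℝ Y] (f : X → Y)
    (hmap : ∀ x ∈ Metric.sphere (0 : X) 1, f x ∈ Metric.sphere (0 : Y) 1)
    (hsurj : ∀ y ∈ Metric.sphere (0 : Y) 1, ∃ x ∈ Metric.sphere (0 : X) 1, f x = y)
    (hiso : ∀ x ∈ Metric.sphere (0 : X) 1, ∀ y ∈ Metric.sphere (0 : X) 1,
      ‖f x - f y‖ = ‖x - y‖)
    (C : Set X) (hC : IsMaximalConvexSubsetOfSphere C) :
    IsMaximalConvexSubsetOfSphere (f '' C) := by
  classical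
  obtain ⟨himg_s, himg_c⟩ := aux_image f hmap hsurj hiso hC
  refine ⟨himg_s, himg_c, ?_⟩
  intro D hDs hDc hsub
  obtain ⟨M, hM, hDM⟩ := aux_exists_max hDs hDc
  -- injectivity of f on the sphere
  have hinj : ∀ a ∈ Metric.sphere (0:X) 1, ∀ b ∈ Metric.sphere (0:X) 1,
      f a = f b → a = b := by
    intro a ha b hb hab
    have h0 : ‖a - b‖ = 0 := by
      rw [← hiso a ha b hb, hab, sub_self, norm_zero]
    exact sub_eq_zero.1 (norm_eq_zero.1 h0)
  -- the inverse map
  choose g₀ hg₀S hg₀f using hsurj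
  set g : Y → X := fun u =>
    if h : u ∈ Metric.sphere (0:Y) 1 then g₀ u h else 0 with hgdef
  have hgval : ∀ u (h : u ∈ Metric.sphere (0:Y) 1), g u = g₀ u h := by
    intro u h
    simp only [hgdef, dif_pos h]
  have hgmap : ∀ u ∈ Metric.sphere (0:Y) 1, g u ∈ Metric.sphere (0:X) 1 := by
    intro u h
    rw [hgval u h]; exact hg₀S u h
  have hgleft : ∀ x ∈ Metric.sphere (0:X) 1, g (f x) = x := by
    intro x hx
    have hfx := hmap x hx
    rw [hgval _ hfx]
    exact hinj _ (hg₀S _ hfx) _ hx (hg₀f _ hfx)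
  have hgright : ∀ u ∈ Metric.sphere (0:Y) 1, f (g u) = u := by
    intro u h
    rw [hgval u h]; exact hg₀f u h
  have hgsurj : ∀ x ∈ Metric.sphere (0:X) 1, ∃ u ∈ Metric.sphere (0:Y) 1, g u = x := by
    intro x hx
    exact ⟨f x, hmap x hx, hgleft x hx⟩
  have hgiso : ∀ u ∈ Metric.sphere (0:Y) 1, ∀ v ∈ Metric.sphere (0:Y) 1,
      ‖g u - g v‖ = ‖u - v‖ := by
    intro u hu v hv
    have h1 := hiso (g u) (hgmap u hu) (g v) (hgmap v hv)
    rw [hgright u hu, hgright v hv] at h1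
    exact h1.symm
  obtain ⟨hgi_s, hgi_c⟩ := aux_image g hgmap hgsurj hgiso hM
  have hCsub : C ⊆ g '' M := by
    intro x hx
    have hfx : f x ∈ M := hDM (hsub ⟨x, hx, rfl⟩)
    exact ⟨f x, hfx, hgleft x (hC.1 hx)⟩
  have hCeq : C = g '' M := hC.2.2 _ hgi_s hgi_c hCsub
  refine Subset.antisymm hsub ?_
  intro d hd
  have hdM : d ∈ M := hDM hd
  have hdS : d ∈ Metric.sphere (0:Y) 1 := hM.1 hdM
  have hgdC : g d ∈ C := by
    rw [hCeq]; exact ⟨d, hdM, rfl⟩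
  exact ⟨g d, hgdC, hgright d hdS⟩
end

section
/- Let H be a complex Hilbert space and let a ∈ B(H) with polar decomposition a = r|a| (r a partial isometry with r* r equal to the range projection of |a|). Suppose h₁, h₂ are continuous functions on σ(|a|) vanishing at 0 with h₁ · h₂ = 0. Then the operators r h₁(|a|) and r h₂(|a|) are orthogonal: (r h₁(|a|))(r h₂(|a|))* = 0 and (r h₂(|a|))*(r h₁(|a|)) = 0. -/
/-!
Since `r* r |a| = |a|` and `|a|` is self-adjoint, also `|a| r* r = |a|`, so `r* r` commutes with
`|a|` and hence with `h₁(|a|)`. As `h₁(|a|) h₂(|a|) = h₂(|a|) h₁(|a|) = 0`, both products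
`r h₁(|a|) h₂(|a|) r*` and `h₂(|a|) r* r h₁(|a|) = h₂(|a|) h₁(|a|) r* r` vanish.
-/

variable {H : Type*} [NormedAddCommGroup H] [InnerProductSpace ℂ H] [CompleteSpace H]

section FunctionalCalculus

variable {R A : Type*} {p : A → Prop} [CommSemiring R] [StarRing R] [MetricSpace R]
  [IsTopologicalSemiring R] [ContinuousStar R] [TopologicalSpace A] [Ring A] [StarRing A]
  [Algebra R A] [ContinuousFunctionalCalculus R A p]

/-- Where `f` or `g` is discontinuous on the spectrum, the junk value `cfc _ a = 0` makes the
claim trivial, so no continuity hypothesis is needed. -/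
lemma cfc_mul_cfc_eq_zero {f g : R → R} {a : A}
    (hfg : ∀ x ∈ spectrum R a, f x * g x = 0) : cfc f a * cfc g a = 0 := by
  by_cases hf : ContinuousOn f (spectrum R a)
  · by_cases hg : ContinuousOn g (spectrum R a)
    · rw [← cfc_mul f g a, cfc_congr (g := fun _ => 0) hfg, cfc_const_zero]
    · rw [cfc_apply_of_not_continuousOn a hg, mul_zero]
  · rw [cfc_apply_of_not_continuousOn a hf, zero_mul]

end FunctionalCalculus

section StarRing

variable {A : Type*} [Ring A] [StarRing A]

lemma commute_star_mul_self_of_star_mul_self_mul_eq {r m : A} (hm : IsSelfAdjoint m)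
    (hrm : star r * r * m = m) : Commute (star r * r) m := by
  have hmr : m * (star r * r) = m := by
    simpa only [star_mul, star_star, hm.star_eq, mul_assoc] using congrArg star hrm
  rw [Commute, SemiconjBy, hrm, hmr]

lemma mul_star_mul_eq_zero_and_star_mul_mul_eq_zero {r x y : A} (hy : IsSelfAdjoint y)
    (hxy : x * y = 0) (hyx : y * x = 0) (hx : Commute (star r * r) x) :
    (r * x) * star (r * y) = 0 ∧ star (r * y) * (r * x) = 0 := by
  rw [star_mul, hy.star_eq]
  constructor
  · calc r * x * (y * star r) = r * (x * y) * star r := by noncomm_ring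
      _ = 0 := by rw [hxy, mul_zero, zero_mul]
  · calc y * star r * (r * x) = y * ((star r * r) * x) := by noncomm_ring
      _ = (y * x) * (star r * r) := by rw [hx.eq, mul_assoc]
      _ = 0 := by rw [hyx, zero_mul]

end StarRing

theorem stmt14_general (r m : H →L[ℂ] H)
    -- `m = |a| = (a* a)^{1/2}`
    (hm : m.IsPositive)
    -- polar decomposition `a = r |a|` with `r* r |a| = |a|`
    (hrr : star r * r * m = m)
    -- `h₁, h₂` continuous, vanishing at `0`, with `h₁ h₂ = 0` on `σ(|a|)`
    (h₁ h₂ : ℝ → ℝ)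
    (horth : ∀ s ∈ spectrum ℝ m, h₁ s * h₂ s = 0) :
    (r * cfc h₁ m) * star (r * cfc h₂ m) = 0 ∧
      star (r * cfc h₂ m) * (r * cfc h₁ m) = 0 := by
  have hcomm : Commute (star r * r) (cfc h₁ m) :=
    ((commute_star_mul_self_of_star_mul_self_mul_eq hm.isSelfAdjoint hrr).symm.cfc_real h₁).symm
  have horth' : ∀ s ∈ spectrum ℝ m, h₂ s * h₁ s = 0 := fun s hs =>
    (mul_comm _ _).trans (horth s hs)
  exact mul_star_mul_eq_zero_and_star_mul_mul_eq_zero (cfc_predicate h₂ m)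
    (cfc_mul_cfc_eq_zero horth) (cfc_mul_cfc_eq_zero horth') hcomm

theorem stmt14 (a r m : H →L[ℂ] H)
    -- `m = |a| = (a* a)^{1/2}`
    (hm : m.IsPositive) (hm2 : m * m = star a * a)
    -- polar decomposition `a = r |a|` with `r* r |a| = |a|`
    (hr : r * star r * r = r) (ha : a = r * m) (hrr : star r * r * m = m)
    -- `h₁, h₂` continuous, vanishing at `0`, with `h₁ h₂ = 0` on `σ(|a|)`
    (h₁ h₂ : ℝ → ℝ) (hc₁ : Continuous h₁) (hc₂ : Continuous h₂)
    (h₁0 : h₁ 0 = 0) (h₂0 : h₂ 0 = 0)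
    (horth : ∀ s ∈ spectrum ℝ m, h₁ s * h₂ s = 0) :
    (r * cfc h₁ m) * star (r * cfc h₂ m) = 0 ∧
      star (r * cfc h₂ m) * (r * cfc h₁ m) = 0 :=
  stmt14_general r m hm hrr h₁ h₂ horth
end

section
/- Let H be a complex Hilbert space, let a ∈ B(H) with polar decomposition a = r|a|, and suppose 1 is an isolated point of σ(|a|) with 1 ∈ σ(|a|). Then v = r · χ_{{1}}(|a|) is a partial isometry in B(H), where χ_{{1}} is the characteristic function of {1} (continuous on σ(|a|) by isolation), and a v* = v v*, so a = v + (1 - v v*) a (1 - v* v). -/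
variable {H : Type*} [NormedAddCommGroup H] [InnerProductSpace ℂ H] [CompleteSpace H]

/-!
Since `1` is isolated in `σ(|a|)`, the indicator `χ_{{1}}` is continuous there, so
`p = χ_{{1}}(|a|)` is a projection with `|a| p = p |a| = p`.
Then `r* r p = r* r |a| p = |a| p = p`, hence `v* v = p r* r p = p`:
`v = r p` is a partial isometry with initial projection `p`.
Moreover `a v* = r |a| p r* = r p r* = v v*`, and `a p = v = v v* a`,
which expands `(1 - v v*) a (1 - v* v)` to `a - v`.
-/

open Topology

theorem continuousOn_indicator_singleton_of_isolated {X M : Type*} [PseudoMetricSpace X]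
    [Zero M] [TopologicalSpace M] {S : Set X} {x : X} (c : M)
    (hx : ∃ ε > 0, ∀ s ∈ S, dist s x < ε → s = x) :
    ContinuousOn (Set.indicator {x} fun _ => c) S := by
  obtain ⟨ε, hε, hiso⟩ := hx
  intro s hs
  -- For `s, t ∈ S` with `dist t s < ε`, isolation of `x` gives `t = x ↔ s = x`.
  have hconst : ∀ᶠ t in 𝓝[S] s,
      Set.indicator {x} (fun _ => c) t = Set.indicator {x} (fun _ => c) s := by
    filter_upwards [self_mem_nhdsWithin,
      mem_nhdsWithin_of_mem_nhds (Metric.ball_mem_nhds s hε)] with t ht hts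
    have hiff : t = x ↔ s = x :=
      ⟨fun h => hiso s hs (h ▸ dist_comm t s ▸ hts), fun h => hiso t ht (h ▸ hts)⟩
    classical
    simp only [Set.indicator_apply, Set.mem_singleton_iff, hiff]
  exact continuousWithinAt_const.congr_of_eventuallyEq hconst rfl

section SpectralProjection

variable {A : Type*} [TopologicalSpace A] [Ring A] [StarRing A] [Algebra ℝ A]
  [ContinuousFunctionalCalculus ℝ A IsSelfAdjoint] {m : A} {x : ℝ}

theorem isStarProjection_cfc_indicator_singleton
    (hx : ∃ ε > 0, ∀ s ∈ spectrum ℝ m, dist s x < ε → s = x) :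
    IsStarProjection (cfc (Set.indicator {x} fun _ => (1 : ℝ)) m) where
  isSelfAdjoint := cfc_predicate _ m
  isIdempotentElem := by
    have hcont := continuousOn_indicator_singleton_of_isolated (1 : ℝ) hx
    rw [IsIdempotentElem, ← cfc_mul _ _ m hcont hcont]
    refine cfc_congr fun s _ => ?_
    by_cases hs : s = x <;> simp [hs]

theorem mul_cfc_indicator_singleton
    (hx : ∃ ε > 0, ∀ s ∈ spectrum ℝ m, dist s x < ε → s = x)
    (hm : IsSelfAdjoint m := by cfc_tac) :
    m * cfc (Set.indicator {x} fun _ => (1 : ℝ)) m =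
      x • cfc (Set.indicator {x} fun _ => (1 : ℝ)) m := by
  have hcont := continuousOn_indicator_singleton_of_isolated (1 : ℝ) hx
  nth_rw 1 [← cfc_id' ℝ m hm]
  rw [← cfc_mul _ _ m (continuousOn_id' _) hcont, ← cfc_const_mul _ _ m hcont]
  refine cfc_congr fun s _ => ?_
  by_cases hs : s = x <;> simp [hs]

theorem cfc_indicator_singleton_mul
    (hx : ∃ ε > 0, ∀ s ∈ spectrum ℝ m, dist s x < ε → s = x)
    (hm : IsSelfAdjoint m := by cfc_tac) :
    cfc (Set.indicator {x} fun _ => (1 : ℝ)) m * m =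
      x • cfc (Set.indicator {x} fun _ => (1 : ℝ)) m := by
  rw [← mul_cfc_indicator_singleton hx hm]
  simpa only [cfc_id' ℝ m hm] using (cfc_commute_cfc (R := ℝ) (fun s => s) _ m).symm.eq

end SpectralProjection

theorem eq_add_one_sub_mul_mul_one_sub_s15 {R : Type*} [Ring R] {a v w : R} (hv : v * w * v = v)
    (hav : a * (w * v) = v) (hva : v * w * a = v) :
    a = v + (1 - v * w) * a * (1 - w * v) := by
  have expand : (1 - v * w) * a * (1 - w * v) =
      a - a * (w * v) - v * w * a + v * w * a * (w * v) := by
    noncomm_ring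
  rw [expand, hav, hva, ← mul_assoc, hv]
  abel

section PolarPart

variable {R : Type*} [Ring R] [StarRing R] {a m p r : R}

theorem IsStarProjection.star_mul_mul_self_eq (hp : IsStarProjection p) (hmp : m * p = p)
    (hrr : star r * r * m = m) : star (r * p) * (r * p) = p := by
  have hrrp : star r * r * p = p := by rw [← hmp, ← mul_assoc, hrr]
  calc star (r * p) * (r * p) = p * (star r * r * p) := by
        rw [star_mul, hp.isSelfAdjoint.star_eq]; noncomm_ring
    _ = p := by rw [hrrp, hp.isIdempotentElem.eq]

theorem IsStarProjection.isPartialIsometry_and_decomposition (hp : IsStarProjection p)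
    (hmp : m * p = p) (hpm : p * m = p) (ha : a = r * m) (hrr : star r * r * m = m) {v : R}
    (hv : v = r * p) :
    v * star v * v = v ∧ a * star v = v * star v ∧
      a = v + (1 - v * star v) * a * (1 - star v * v) := by
  have hvv : star v * v = p := hv ▸ hp.star_mul_mul_self_eq hmp hrr
  have hpp : p * p = p := hp.isIdempotentElem.eq
  have hvp : v * p = v := by rw [hv, mul_assoc, hpp]
  have hpartial : v * star v * v = v := by rw [mul_assoc, hvv, hvp]
  have hstar : star v = p * star r := by rw [hv, star_mul, hp.isSelfAdjoint.star_eq]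
  refine ⟨hpartial, ?_, eq_add_one_sub_mul_mul_one_sub_s15 hpartial ?_ ?_⟩
  · calc a * star v = r * (m * p) * star r := by rw [ha, hstar]; noncomm_ring
      _ = v * p * star r := by rw [hmp, hvp, hv]
      _ = v * star v := by rw [hstar, mul_assoc]
  · rw [hvv, ha, mul_assoc, hmp, hv]
  · calc v * star v * a = v * (p * (star r * r * m)) := by rw [hstar, ha, hv]; noncomm_ring
      _ = v := by rw [hrr, hpm, hvp]

end PolarPart

theorem stmt15_general (a r m : H →L[ℂ] H)
    -- `m = |a| = (a* a)^{1/2}`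
    (hm : m.IsPositive)
    -- polar decomposition `a = r |a|` with `r* r |a| = |a|`
    (ha : a = r * m) (hrr : star r * r * m = m)
    -- `1 ∈ σ(|a|)` is an isolated point of the spectrum
    (hiso : ∃ ε > (0 : ℝ), ∀ s ∈ spectrum ℝ m, |s - 1| < ε → s = 1) :
    -- `v = r χ_{{1}}(|a|)` is a partial isometry with `a v* = v v*`,
    -- hence `a = v + (1 - v v*) a (1 - v* v)`
    ∀ v : H →L[ℂ] H, v = r * cfc (Set.indicator ({1} : Set ℝ) (fun _ => (1 : ℝ))) m →
      v * star v * v = v ∧ a * star v = v * star v ∧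
        a = v + (1 - v * star v) * a * (1 - star v * v) := by
  have hsa : IsSelfAdjoint m := hm.isSelfAdjoint
  have hiso' : ∃ ε > 0, ∀ s ∈ spectrum ℝ m, dist s 1 < ε → s = 1 := by
    simpa only [Real.dist_eq] using hiso
  intro v hv
  refine (isStarProjection_cfc_indicator_singleton hiso').isPartialIsometry_and_decomposition
    ?_ ?_ ha hrr hv
  · simpa only [one_smul] using mul_cfc_indicator_singleton hiso' hsa
  · simpa only [one_smul] using cfc_indicator_singleton_mul hiso' hsa

theorem stmt15 (a r m : H →L[ℂ] H)
    -- `m = |a| = (a* a)^{1/2}`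
    (hm : m.IsPositive) (hm2 : m * m = star a * a)
    -- polar decomposition `a = r |a|` with `r* r |a| = |a|`
    (hr : r * star r * r = r) (ha : a = r * m) (hrr : star r * r * m = m)
    -- `1 ∈ σ(|a|)` is an isolated point of the spectrum
    (h1 : (1 : ℝ) ∈ spectrum ℝ m)
    (hiso : ∃ ε > (0 : ℝ), ∀ s ∈ spectrum ℝ m, |s - 1| < ε → s = 1) :
    -- `v = r χ_{{1}}(|a|)` is a partial isometry with `a v* = v v*`,
    -- hence `a = v + (1 - v v*) a (1 - v* v)`
    ∀ v : H →L[ℂ] H, v = r * cfc (Set.indicator ({1} : Set ℝ) (fun _ => (1 : ℝ))) m →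
      v * star v * v = v ∧ a * star v = v * star v ∧
        a = v + (1 - v * star v) * a * (1 - star v * v) :=
  stmt15_general a r m hm ha hrr hiso
end
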